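/- arXiv:1603.07301 — 4 statements merged into one kernel-verified Lean document; each statement's English description precedes it below -/
import Mathlib

section
/- Let A ∈ ℝ^{N×N} be symmetric positive definite, D ∈ ℝ^{N×M}, g ∈ ℝ^N, and h ∈ ℝ^N with h in the range of D. Let h' be a minimizer over the range of D of the quadratic function y ↦ gᵀ(y − h) + (1/2)(y − h)ᵀ A (y − h). Then such a minimizer exists and (h' − h)ᵀ A (h' − h) = gᵀ D (Dᵀ A D)† Dᵀ g, where (·)† denotes the Moore–Penrose pseudo-inverse. -/
open Matrix Filter Topology

noncomputable section

/-- Identification of `EuclideanSpace ℝ (Fin N)` with plain tuples `Fin N → ℝ`. -/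
def toEuc {N : ℕ} (v : Fin N → ℝ) : EuclideanSpace ℝ (Fin N) :=
  (WithLp.equiv 2 (Fin N → ℝ)).symm v

def ofEuc {N : ℕ} (v : EuclideanSpace ℝ (Fin N)) : Fin N → ℝ :=
  WithLp.equiv 2 (Fin N → ℝ) v

/-- The quadratic form `vᵀ M v`. -/
def qf {N : ℕ} (M : Matrix (Fin N) (Fin N) ℝ)
    (v : EuclideanSpace ℝ (Fin N)) : ℝ :=
  ofEuc v ⬝ᵥ M.mulVec (ofEuc v)

/-- Matrix-vector product `M v`, viewed in `EuclideanSpace`. -/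
def mulE {N : ℕ} (M : Matrix (Fin N) (Fin N) ℝ)
    (v : EuclideanSpace ℝ (Fin N)) : EuclideanSpace ℝ (Fin N) :=
  toEuc (M.mulVec (ofEuc v))

/-- The range of the matrix `D`, i.e. `{D u : u ∈ ℝ^M}`, as a subset of `EuclideanSpace`. -/
def rangeD {N M : ℕ} (D : Matrix (Fin N) (Fin M) ℝ) : Set (EuclideanSpace ℝ (Fin N)) :=
  {x | ∃ u : Fin M → ℝ, x = toEuc (D.mulVec u)}

open scoped Classical in
/-- The Moore–Penrose pseudo-inverse of a real matrix, defined via its characterizing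
(Penrose) equations; it exists and is unique for every real matrix. -/
def pinv {m n : ℕ} (A : Matrix (Fin m) (Fin n) ℝ) : Matrix (Fin n) (Fin m) ℝ :=
  if h : ∃ B : Matrix (Fin n) (Fin m) ℝ,
      A * B * A = A ∧ B * A * B = B ∧ (A * B)ᵀ = A * B ∧ (B * A)ᵀ = B * A
  then h.choose else 0

end

private noncomputable def qfun {M : ℕ} (t : Fin M → ℝ) (B : Matrix (Fin M) (Fin M) ℝ)
    (w : Fin M → ℝ) : ℝ :=
  t ⬝ᵥ w + (1/2) * (w ⬝ᵥ B *ᵥ w)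

/-- dot product vs. mulVec / transpose. -/
private lemma dp_mv {m n : ℕ} (E : Matrix (Fin m) (Fin n) ℝ) (a : Fin m → ℝ) (b : Fin n → ℝ) :
    a ⬝ᵥ E *ᵥ b = Eᵀ *ᵥ a ⬝ᵥ b := by
  rw [Matrix.dotProduct_mulVec, Matrix.mulVec_transpose]

/-- Every real symmetric matrix admits a Moore–Penrose pseudo-inverse. -/
private lemma exists_penrose {n : ℕ} (B : Matrix (Fin n) (Fin n) ℝ) (hB : B.IsHermitian) :
    ∃ C : Matrix (Fin n) (Fin n) ℝ,
      B * C * B = B ∧ C * B * C = C ∧ (B * C)ᵀ = B * C ∧ (C * B)ᵀ = C * B := by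
  classical
  set U : Matrix (Fin n) (Fin n) ℝ := (hB.eigenvectorUnitary : Matrix (Fin n) (Fin n) ℝ) with hUdef
  set d : Fin n → ℝ := hB.eigenvalues with hddef
  have h1 : star U * U = 1 := Unitary.coe_star_mul_self _
  have hsU : star U = Uᵀ := by
    rw [Matrix.star_eq_conjTranspose, Matrix.conjTranspose_eq_transpose_of_trivial]
  have hBspec : B = U * Matrix.diagonal d * star U := by
    have h2 := hB.spectral_theorem
    simpa only [RCLike.ofReal_real_eq_id, Function.comp_id, Function.id_comp, Unitary.conjStarAlgAut_apply] using h2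
  have mulUD : ∀ e f : Fin n → ℝ,
      (U * Matrix.diagonal e * star U) * (U * Matrix.diagonal f * star U)
        = U * Matrix.diagonal (fun i => e i * f i) * star U := by
    intro e f
    calc (U * Matrix.diagonal e * star U) * (U * Matrix.diagonal f * star U)
        = U * Matrix.diagonal e * ((star U * U) * (Matrix.diagonal f * star U)) := by
          simp only [Matrix.mul_assoc]
      _ = U * (Matrix.diagonal e * Matrix.diagonal f) * star U := by
          rw [h1, one_mul]; simp only [Matrix.mul_assoc]
      _ = U * Matrix.diagonal (fun i => e i * f i) * star U := by
          rw [Matrix.diagonal_mul_diagonal]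
  have hsymm : ∀ e : Fin n → ℝ,
      (U * Matrix.diagonal e * star U)ᵀ = U * Matrix.diagonal e * star U := by
    intro e
    rw [hsU, Matrix.transpose_mul, Matrix.transpose_mul, Matrix.transpose_transpose,
      Matrix.diagonal_transpose, Matrix.mul_assoc]
  refine ⟨U * Matrix.diagonal (fun i => (d i)⁻¹) * star U, ?_, ?_, ?_, ?_⟩
  · rw [hBspec, mulUD, mulUD]
    have : (fun i => d i * (d i)⁻¹ * d i) = d := by
      funext i
      by_cases h : d i = 0
      · simp [h]
      · field_simp
    rw [this]
  · rw [hBspec, mulUD, mulUD]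
    have : (fun i => (d i)⁻¹ * d i * (d i)⁻¹) = fun i => (d i)⁻¹ := by
      funext i
      by_cases h : d i = 0
      · simp [h]
      · field_simp
    rw [this]
  · rw [hBspec, mulUD]; exact hsymm _
  · rw [hBspec, mulUD]; exact hsymm _

private lemma pinv_spec {n : ℕ} (B : Matrix (Fin n) (Fin n) ℝ) (hB : B.IsHermitian) :
    B * pinv B * B = B ∧ pinv B * B * pinv B = pinv B ∧
      (B * pinv B)ᵀ = B * pinv B ∧ (pinv B * B)ᵀ = pinv B * B := by
  classical
  have h := exists_penrose B hB
  unfold pinv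
  rw [dif_pos h]
  exact h.choose_spec

theorem quadratic_subspace_minimizer_identity
    {N M : ℕ} (A : Matrix (Fin N) (Fin N) ℝ) (hA : A.PosDef)
    (D : Matrix (Fin N) (Fin M) ℝ) (g x : Fin N → ℝ)
    (hx : ∃ u : Fin M → ℝ, x = D.mulVec u) :
    (∃ x' : Fin N → ℝ, (∃ u : Fin M → ℝ, x' = D.mulVec u) ∧
        ∀ y : Fin N → ℝ, (∃ u : Fin M → ℝ, y = D.mulVec u) →
          g ⬝ᵥ (x' - x) + (1/2) * ((x' - x) ⬝ᵥ A.mulVec (x' - x)) ≤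
            g ⬝ᵥ (y - x) + (1/2) * ((y - x) ⬝ᵥ A.mulVec (y - x))) ∧
    ∀ x' : Fin N → ℝ, (∃ u : Fin M → ℝ, x' = D.mulVec u) →
      (∀ y : Fin N → ℝ, (∃ u : Fin M → ℝ, y = D.mulVec u) →
        g ⬝ᵥ (x' - x) + (1/2) * ((x' - x) ⬝ᵥ A.mulVec (x' - x)) ≤
          g ⬝ᵥ (y - x) + (1/2) * ((y - x) ⬝ᵥ A.mulVec (y - x))) →
      (x' - x) ⬝ᵥ A.mulVec (x' - x) = g ⬝ᵥ (D * pinv (Dᵀ * A * D) * Dᵀ).mulVec g := by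
  classical
  obtain ⟨ux, hux⟩ := hx
  set B : Matrix (Fin M) (Fin M) ℝ := Dᵀ * A * D with hBdef
  have hAsym : Aᵀ = A := by
    have := hA.1
    rwa [Matrix.IsHermitian, Matrix.conjTranspose_eq_transpose_of_trivial] at this
  have hBsym : Bᵀ = B := by
    rw [hBdef, Matrix.transpose_mul, Matrix.transpose_mul, Matrix.transpose_transpose, hAsym,
      Matrix.mul_assoc]
  have hBherm : B.IsHermitian := by
    rw [Matrix.IsHermitian, Matrix.conjTranspose_eq_transpose_of_trivial, hBsym]
  obtain ⟨hp1, hp2, hp3, hp4⟩ := pinv_spec B hBherm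
  set P : Matrix (Fin M) (Fin M) ℝ := pinv B with hPdef
  set t : Fin M → ℝ := Dᵀ *ᵥ g with htdef
  -- quadratic form identity
  have hquadB : ∀ w : Fin M → ℝ, (D *ᵥ w) ⬝ᵥ A *ᵥ (D *ᵥ w) = w ⬝ᵥ B *ᵥ w := by
    intro w
    rw [Matrix.mulVec_mulVec, dotProduct_comm, dp_mv, Matrix.mulVec_mulVec,
      ← Matrix.mul_assoc, ← hBdef, dotProduct_comm]
  have hlinD : ∀ w : Fin M → ℝ, g ⬝ᵥ (D *ᵥ w) = t ⬝ᵥ w := by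
    intro w
    rw [dp_mv, ← htdef]
  -- objective in terms of offsets
  have hobj : ∀ w : Fin M → ℝ,
      g ⬝ᵥ (D *ᵥ w) + (1/2) * ((D *ᵥ w) ⬝ᵥ A *ᵥ (D *ᵥ w)) = qfun t B w := by
    intro w; rw [qfun, hquadB, hlinD]
  -- symmetry swap
  have hswap : ∀ v w : Fin M → ℝ, v ⬝ᵥ B *ᵥ w = w ⬝ᵥ B *ᵥ v := by
    intro v w
    rw [dp_mv, hBsym, dotProduct_comm]
  have hBdot : ∀ v w : Fin M → ℝ, v ⬝ᵥ B *ᵥ w = (B *ᵥ v) ⬝ᵥ w := by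
    intro v w
    rw [dp_mv, hBsym]
  -- expansion of f
  have hexp : ∀ w d : Fin M → ℝ,
      qfun t B (w + d) = qfun t B w + (t + B *ᵥ w) ⬝ᵥ d + (1/2) * (d ⬝ᵥ B *ᵥ d) := by
    intro w d
    simp only [qfun, Matrix.mulVec_add, dotProduct_add, add_dotProduct]
    rw [hswap d w, hBdot w d]
    ring
  -- positive semidefiniteness of B
  have hpsd : ∀ w : Fin M → ℝ, 0 ≤ w ⬝ᵥ B *ᵥ w := by
    intro w
    rw [← hquadB]
    have := hA.posSemidef.dotProduct_mulVec_nonneg (D *ᵥ w)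
    simpa using this
  -- key projection identity : B * P * Dᵀ = Dᵀ
  have hproj : B * P * Dᵀ = Dᵀ := by
    set Q : Matrix (Fin M) (Fin M) ℝ := 1 - B * P with hQdef
    have hQsym : Qᵀ = Q := by
      rw [hQdef, Matrix.transpose_sub, Matrix.transpose_one, hp3]
    have hQB : Q * B = 0 := by
      rw [hQdef, Matrix.sub_mul, Matrix.one_mul, hp1, sub_self]
    set R : Matrix (Fin M) (Fin N) ℝ := Q * Dᵀ with hRdef
    have hRA : R * A * Rᵀ = 0 := by
      have : R * A * Rᵀ = Q * B * Q := by
        rw [hRdef, Matrix.transpose_mul, Matrix.transpose_transpose, hQsym, hBdef]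
        simp only [Matrix.mul_assoc]
      rw [this, hQB, Matrix.zero_mul]
    have hR0 : R = 0 := by
      ext i j
      have hrow : (fun k => R i k) = 0 := by
        have hdiag : (fun k => R i k) ⬝ᵥ A *ᵥ (fun k => R i k) = 0 := by
          have heq : (R * A * Rᵀ) i i = (fun k => R i k) ⬝ᵥ A *ᵥ (fun k => R i k) := by
            simp only [Matrix.mul_apply, Matrix.transpose_apply, dotProduct,
              Matrix.mulVec, Finset.sum_mul, Finset.mul_sum]
            rw [Finset.sum_comm]
            exact Finset.sum_congr rfl fun a _ => Finset.sum_congr rfl fun b _ => by ring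
          rw [← heq, hRA, Matrix.zero_apply]
        by_contra hne
        have hpos := hA.dotProduct_mulVec_pos (x := fun k => R i k) hne
        simp only [star_trivial] at hpos
        rw [hdiag] at hpos
        exact lt_irrefl 0 hpos
      have := congrFun hrow j
      simpa using this
    rw [hRdef, hQdef, Matrix.sub_mul, Matrix.one_mul] at hR0
    have := sub_eq_zero.mp hR0
    exact this.symm
  -- the canonical minimizer offset
  set w₀ : Fin M → ℝ := -(P *ᵥ t) with hw0def
  have hstat0 : t + B *ᵥ w₀ = 0 := by
    have hBPt : B *ᵥ (P *ᵥ t) = t := by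
      rw [htdef, Matrix.mulVec_mulVec, Matrix.mulVec_mulVec, hproj]
    rw [hw0def, Matrix.mulVec_neg, hBPt, add_neg_cancel]
  -- any stationary point is a global min of f
  have hmin : ∀ w : Fin M → ℝ, t + B *ᵥ w = 0 → ∀ w', qfun t B w ≤ qfun t B w' := by
    intro w hw w'
    have h := hexp w (w' - w)
    have hsum : w + (w' - w) = w' := by abel
    rw [hsum, hw, zero_dotProduct] at h
    have := hpsd (w' - w)
    linarith [h.le, h.ge]
  constructor
  · -- existence
    refine ⟨x + D *ᵥ w₀, ⟨ux + w₀, by rw [hux, Matrix.mulVec_add]⟩, ?_⟩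
    rintro y ⟨u, huy⟩
    have hxy : y - x = D *ᵥ (u - ux) := by rw [huy, hux, Matrix.mulVec_sub]
    have hxx : x + D *ᵥ w₀ - x = D *ᵥ w₀ := by abel
    rw [hxy, hxx, hobj, hobj]
    exact hmin w₀ hstat0 (u - ux)
  · -- identity for any minimizer
    rintro x' ⟨u', hu'⟩ hminx'
    set w' : Fin M → ℝ := u' - ux with hw'def
    have hx'x : x' - x = D *ᵥ w' := by rw [hu', hux, Matrix.mulVec_sub]
    have hfmin : ∀ w, qfun t B w' ≤ qfun t B w := by
      intro w
      have h := hminx' (x + D *ᵥ w) ⟨ux + w, by rw [hux, Matrix.mulVec_add]⟩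
      have hxx : x + D *ᵥ w - x = D *ᵥ w := by abel
      rw [hx'x, hxx, hobj, hobj] at h
      exact h
    -- stationarity
    set c : Fin M → ℝ := t + B *ᵥ w' with hcdef
    have hc0 : c = 0 := by
      set q : ℝ := (1/2) * (c ⬝ᵥ B *ᵥ c) with hqdef
      have hq : 0 ≤ q := by
        have := hpsd c; rw [hqdef]; linarith
      have hcc : 0 ≤ c ⬝ᵥ c :=
        Finset.sum_nonneg fun i _ => mul_self_nonneg _
      have hkey : ∀ s : ℝ, 0 ≤ s * (c ⬝ᵥ c) + s ^ 2 * q := by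
        intro s
        have h := hfmin (w' + s • c)
        rw [hexp w' (s • c)] at h
        have h1 : c ⬝ᵥ (s • c) = s * (c ⬝ᵥ c) := by
          rw [dotProduct_smul]; simp
        have h2 : (s • c) ⬝ᵥ B *ᵥ (s • c) = s ^ 2 * (c ⬝ᵥ B *ᵥ c) := by
          rw [Matrix.mulVec_smul, dotProduct_smul, smul_dotProduct]
          simp; ring
        rw [← hcdef, h1, h2] at h
        rw [hqdef]
        nlinarith [h]
      have hepsq : ∀ ε : ℝ, 0 < ε → c ⬝ᵥ c ≤ ε * q := by
        intro ε hε
        have h := hkey (-ε)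
        nlinarith [h, hε]
      have hccle : c ⬝ᵥ c ≤ 0 := by
        rcases eq_or_lt_of_le hq with hq0 | hqpos
        · have := hepsq 1 one_pos
          rw [← hq0] at this
          simpa using this
        · have hall : ∀ ε' : ℝ, 0 < ε' → c ⬝ᵥ c ≤ 0 + ε' := by
            intro ε' hε'
            have h := hepsq (ε' / q) (by positivity)
            rw [div_mul_cancel₀ _ (ne_of_gt hqpos)] at h
            linarith
          exact le_of_forall_pos_le_add hall
      have hccz : c ⬝ᵥ c = 0 := le_antisymm hccle hcc
      exact dotProduct_self_eq_zero.mp hccz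
    have hBw' : B *ᵥ w' = -t := by
      have h : t + B *ᵥ w' = 0 := by rw [← hcdef, hc0]
      exact eq_neg_of_add_eq_zero_right h
    -- final computation
    have hRHS : g ⬝ᵥ (D * P * Dᵀ) *ᵥ g = t ⬝ᵥ P *ᵥ t := by
      rw [← Matrix.mulVec_mulVec, ← htdef, ← Matrix.mulVec_mulVec, hlinD]
    rw [hx'x, hquadB, hRHS]
    have hfin : t ⬝ᵥ P *ᵥ t = w' ⬝ᵥ B *ᵥ w' := by
      rw [show t = -(B *ᵥ w') by rw [hBw', neg_neg]]
      rw [Matrix.mulVec_neg, dotProduct_neg, neg_dotProduct, neg_neg,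
        Matrix.mulVec_mulVec, dotProduct_comm, dp_mv, Matrix.mulVec_mulVec,
        ← Matrix.mul_assoc, hBsym, hp1, dotProduct_comm]
    rw [hfin]
end

section
/- Under Assumptions 1 and 2, the successive differences of the MM subspace iterates converge to zero: h_{n+1} − h_n → 0 as n → ∞. -/
open Matrix Filter Topology

section helpers
variable {N : ℕ}

lemma abs_coord_le_norm (v : EuclideanSpace ℝ (Fin N)) (i : Fin N) : |v i| ≤ ‖v‖ := by
  rw [EuclideanSpace.norm_eq]
  have h1 : |v i| = Real.sqrt (‖v i‖ ^ 2) := by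
    rw [Real.sqrt_sq (norm_nonneg _), Real.norm_eq_abs]
  rw [h1]
  apply Real.sqrt_le_sqrt
  exact Finset.single_le_sum (f := fun j => ‖v j‖ ^ 2) (fun j _ => by positivity)
    (Finset.mem_univ i)

lemma qf_add_left (M M' : Matrix (Fin N) (Fin N) ℝ) (x : EuclideanSpace ℝ (Fin N)) :
    qf (M + M') x = qf M x + qf M' x := by
  simp [qf, Matrix.add_mulVec, dotProduct_add]

lemma qf_smul (M : Matrix (Fin N) (Fin N) ℝ) (t : ℝ) (x : EuclideanSpace ℝ (Fin N)) :
    qf M (t • x) = t ^ 2 * qf M x := by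
  have h1 : ofEuc (t • x) = t • ofEuc x := rfl
  simp only [qf, h1, Matrix.mulVec_smul, dotProduct_smul, smul_dotProduct,
    smul_eq_mul]
  ring

lemma qf_nonneg {M : Matrix (Fin N) (Fin N) ℝ} (hM : M.PosSemidef)
    (x : EuclideanSpace ℝ (Fin N)) : 0 ≤ qf M x := by
  have := hM.dotProduct_mulVec_nonneg (ofEuc x); simpa [qf] using this

lemma abs_qf_le (M : Matrix (Fin N) (Fin N) ℝ) (x : EuclideanSpace ℝ (Fin N)) :
    |qf M x| ≤ (∑ i, ∑ j, |M i j|) * ‖x‖ ^ 2 := by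
  have hx : ∀ i, |ofEuc x i| ≤ ‖x‖ := fun i => abs_coord_le_norm x i
  have h1 : qf M x = ∑ i, ∑ j, ofEuc x i * (M i j * ofEuc x j) := by
    simp [qf, dotProduct, Matrix.mulVec, Finset.mul_sum]
  rw [h1]
  calc |∑ i, ∑ j, ofEuc x i * (M i j * ofEuc x j)|
      ≤ ∑ i, |∑ j, ofEuc x i * (M i j * ofEuc x j)| := Finset.abs_sum_le_sum_abs _ _
    _ ≤ ∑ i, ∑ j, |ofEuc x i * (M i j * ofEuc x j)| :=
        Finset.sum_le_sum (fun i _ => Finset.abs_sum_le_sum_abs _ _)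
    _ ≤ ∑ i, ∑ j, |M i j| * ‖x‖ ^ 2 := by
        refine Finset.sum_le_sum (fun i _ => Finset.sum_le_sum (fun j _ => ?_))
        have h2 : |ofEuc x i * (M i j * ofEuc x j)| = |M i j| * (|ofEuc x i| * |ofEuc x j|) := by
          rw [abs_mul, abs_mul]; ring
        rw [h2, sq]
        exact mul_le_mul_of_nonneg_left
          (mul_le_mul (hx i) (hx j) (abs_nonneg _) (norm_nonneg _)) (abs_nonneg _)
    _ = (∑ i, ∑ j, |M i j|) * ‖x‖ ^ 2 := by rw [Finset.sum_mul]; simp [Finset.sum_mul]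

lemma abs_dot_le (a b : EuclideanSpace ℝ (Fin N)) :
    |ofEuc a ⬝ᵥ ofEuc b| ≤ ‖a‖ * ‖b‖ := by
  have h1 : ofEuc a ⬝ᵥ ofEuc b = (inner ℝ a b : ℝ) := by
    rw [PiLp.inner_apply]
    simp [dotProduct, ofEuc, mul_comm]
  rw [h1]
  exact abs_real_inner_le_norm a b

lemma mem_rangeD_line {Mn : ℕ} {D : Matrix (Fin N) (Fin Mn) ℝ}
    {a b : EuclideanSpace ℝ (Fin N)} (ha : a ∈ rangeD D) (hb : b ∈ rangeD D) (t : ℝ) :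
    a + t • (b - a) ∈ rangeD D := by
  obtain ⟨u, hu⟩ := ha
  obtain ⟨v, hv⟩ := hb
  refine ⟨u + t • (v - u), ?_⟩
  rw [hu, hv, Matrix.mulVec_add, Matrix.mulVec_smul, Matrix.mulVec_sub]
  rfl

lemma exists_posdef_lb (hN : 0 < N) {R : Matrix (Fin N) (Fin N) ℝ} (hR : R.PosDef) :
    ∃ lam : ℝ, 0 < lam ∧ ∀ x : EuclideanSpace ℝ (Fin N), lam * ‖x‖ ^ 2 ≤ qf R x := by
  haveI : Nontrivial (EuclideanSpace ℝ (Fin N)) := by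
    refine ⟨⟨EuclideanSpace.single ⟨0, hN⟩ (1:ℝ), 0, ?_⟩⟩
    intro hcontra
    have := congrArg (fun v : EuclideanSpace ℝ (Fin N) => v ⟨0, hN⟩) hcontra
    simp [EuclideanSpace.single_apply] at this
  have hqc : Continuous (qf R) := by
    have h0 : (qf R) = fun x : EuclideanSpace ℝ (Fin N) =>
        ∑ i, ∑ j, x i * (R i j * x j) := by
      funext x
      simp [qf, dotProduct, Matrix.mulVec, Finset.mul_sum]; rfl
    rw [h0]
    refine continuous_finset_sum _ (fun i _ => continuous_finset_sum _ (fun j _ => ?_))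
    exact (PiLp.continuous_apply (p := 2) (β := fun _ => ℝ) i).mul (continuous_const.mul (PiLp.continuous_apply (p := 2) (β := fun _ => ℝ) j))
  have hsne : (Metric.sphere (0 : EuclideanSpace ℝ (Fin N)) 1).Nonempty :=
    NormedSpace.sphere_nonempty.mpr zero_le_one
  obtain ⟨x0, hx0s, hx0min⟩ := (isCompact_sphere (0 : EuclideanSpace ℝ (Fin N)) 1).exists_isMinOn
    hsne hqc.continuousOn
  have hx0norm : ‖x0‖ = 1 := by simpa using mem_sphere_zero_iff_norm.mp hx0s
  have hx0ne : x0 ≠ 0 := by intro hc; rw [hc] at hx0norm; simp at hx0norm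
  have hlam : 0 < qf R x0 := by
    have h0 : ofEuc x0 ≠ 0 := fun hc => hx0ne (congrArg toEuc hc)
    have := hR.dotProduct_mulVec_pos h0
    simpa [qf] using this
  refine ⟨qf R x0, hlam, fun x => ?_⟩
  rcases eq_or_ne x 0 with rfl | hx
  · simp [qf, ofEuc]
  · have hnx : (0:ℝ) < ‖x‖ := norm_pos_iff.mpr hx
    have hun : ‖(‖x‖⁻¹ • x : EuclideanSpace ℝ (Fin N))‖ = 1 := by
      rw [norm_smul]; simp [abs_of_pos (inv_pos.mpr hnx), inv_mul_cancel₀ hnx.ne']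
    have hus : (‖x‖⁻¹ • x : EuclideanSpace ℝ (Fin N)) ∈
        Metric.sphere (0 : EuclideanSpace ℝ (Fin N)) 1 := by
      simpa [mem_sphere_zero_iff_norm] using hun
    have hmin : qf R x0 ≤ qf R (‖x‖⁻¹ • x) := hx0min hus
    rw [qf_smul] at hmin
    calc qf R x0 * ‖x‖ ^ 2 ≤ (‖x‖⁻¹ ^ 2 * qf R x) * ‖x‖ ^ 2 :=
          mul_le_mul_of_nonneg_right hmin (by positivity)
      _ = qf R x := by field_simp

lemma quad_min_line {g q : ℝ} (hq : 0 ≤ q)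
    (H : ∀ t : ℝ, g + q / 2 ≤ t * g + t ^ 2 * q / 2) : g + q ≤ 0 := by
  rcases eq_or_lt_of_le hq with hq0 | hq0
  · have h0 := H 0; rw [← hq0] at h0 ⊢; linarith
  · have hv := H (-g / q)
    have h1 : (-g / q) * g + (-g / q) ^ 2 * q / 2 = -g ^ 2 / (2 * q) := by
      field_simp; ring
    rw [h1, le_div_iff₀ (by positivity)] at hv
    have hkey : (g + q) ^ 2 ≤ 0 := by nlinarith
    nlinarith [sq_nonneg (g + q)]

end helpers
set_option maxHeartbeats 1000000 in
theorem mm_successive_differences_tendsto_zero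
    {N : ℕ} (hN : 0 < N)
    (R : Matrix (Fin N) (Fin N) ℝ) (hRpd : R.PosDef)
    (r : EuclideanSpace ℝ (Fin N))
    (Ψ : EuclideanSpace ℝ (Fin N) → ℝ)
    (hΨbdd : BddBelow (Set.range Ψ))
    (hΨconv : ConvexOn ℝ Set.univ Ψ)
    (hΨC2 : ContDiff ℝ 2 Ψ)
    (gradΨ : EuclideanSpace ℝ (Fin N) → EuclideanSpace ℝ (Fin N))
    (hgradΨ : ∀ x, HasGradientAt Ψ (gradΨ x) x)
    (hessΨ : EuclideanSpace ℝ (Fin N) → Matrix (Fin N) (Fin N) ℝ)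
    (hhessΨ : ∀ x, HasFDerivAt gradΨ
      (LinearMap.toContinuousLinearMap (Matrix.toEuclideanLin (hessΨ x))) x)
    (F : EuclideanSpace ℝ (Fin N) → ℝ)
    (hF : ∀ x, F x = (1/2) * qf R x - ofEuc r ⬝ᵥ ofEuc x + Ψ x)
    (Rn : ℕ → Matrix (Fin N) (Fin N) ℝ) (hRnpsd : ∀ n, (Rn n).PosSemidef)
    (rn : ℕ → EuclideanSpace ℝ (Fin N))
    (Fn : ℕ → EuclideanSpace ℝ (Fin N) → ℝ)
    (hFn : ∀ n x, Fn n x = (1/2) * qf (Rn n) x - ofEuc (rn n) ⬝ᵥ ofEuc x + Ψ x)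
    (B : EuclideanSpace ℝ (Fin N) → Matrix (Fin N) (Fin N) ℝ)
    (hBpsd : ∀ x, (B x).PosSemidef)
    (An : ℕ → EuclideanSpace ℝ (Fin N) → Matrix (Fin N) (Fin N) ℝ)
    (hAn : ∀ n x, An n x = Rn n + B x)
    (gradFn : ℕ → EuclideanSpace ℝ (Fin N) → EuclideanSpace ℝ (Fin N))
    (hgradFn : ∀ n x, HasGradientAt (Fn n) (gradFn n x) x)
    (Θ : ℕ → EuclideanSpace ℝ (Fin N) → EuclideanSpace ℝ (Fin N) → ℝ)
    (hΘ : ∀ n x y, Θ n x y =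
      Fn n y + ofEuc (gradFn n y) ⬝ᵥ ofEuc (x - y) + (1/2) * qf (An n y) (x - y))
    (M : ℕ → ℕ) (D : (n : ℕ) → Matrix (Fin N) (Fin (M n)) ℝ)
    (h : ℕ → EuclideanSpace ℝ (Fin N))
    (halg : ∀ n, h (n+1) ∈ rangeD (D n) ∧
      ∀ y ∈ rangeD (D n), Θ n (h (n+1)) (h n) ≤ Θ n y (h n))
    (hmaj : ∀ n x, Fn n x ≤ Θ n x (h n))
    (ha1r : Summable (fun n => ‖rn n - rn (n+1)‖))
    (ha1R : ∀ i j, Summable (fun n => |Rn n i j - Rn (n+1) i j|))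
    (ha1rlim : Tendsto rn atTop (𝓝 r))
    (ha1Rlim : ∀ i j, Tendsto (fun n => Rn n i j) atTop (𝓝 (R i j)))
    (ha2i : ∀ n, gradFn n (h n) ∈ rangeD (D n) ∧ h n ∈ rangeD (D n))
    (V : Matrix (Fin N) (Fin N) ℝ) (hVpd : V.PosDef)
    (ha2ii : ∀ x, (B x - hessΨ x).PosSemidef ∧ (V - B x).PosSemidef)
    (ha2iii : (∀ n, rn n = r ∧ Rn n = R) ∨
      (∃ c : ℝ, ∀ x, ‖mulE (B x) x - gradΨ x‖ ≤ c))
    :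
    Tendsto (fun n => h (n+1) - h n) atTop (𝓝 (0 : EuclideanSpace ℝ (Fin N))) := by

  classical
  obtain ⟨m, hm⟩ : ∃ m : ℝ, ∀ x, m ≤ Ψ x := by
    obtain ⟨m, hm⟩ := hΨbdd
    exact ⟨m, fun x => hm ⟨x, rfl⟩⟩
  obtain ⟨ρ, hρ⟩ : ∃ ρ : ℝ, ∀ n, ‖rn n‖ ≤ ρ := by
    obtain ⟨ρ, hρ⟩ := (ha1rlim.norm).bddAbove_range
    exact ⟨ρ, fun n => hρ ⟨n, rfl⟩⟩
  obtain ⟨lam, hlam, hlb⟩ := exists_posdef_lb hN hRpd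
  obtain ⟨δ, hδ⟩ : ∃ _x : ℕ → EuclideanSpace ℝ (Fin N), _x = fun n => h (n + 1) - h n := ⟨_, rfl⟩
  obtain ⟨q, hqdef⟩ : ∃ _x : ℕ → ℝ, _x = fun n => qf (An n (h n)) (δ n) := ⟨_, rfl⟩
  have hAnpsd : ∀ n, (An n (h n)).PosSemidef := fun n => by
    rw [hAn]; exact (hRnpsd n).add (hBpsd _)
  have hqnn : ∀ n, 0 ≤ q n := fun n => by
    rw [hqdef]; exact qf_nonneg (hAnpsd n) _
  -- key descent inequality
  have hkey : ∀ n, Fn n (h (n + 1)) + q n / 2 ≤ Fn n (h n) := by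
    intro n
    obtain ⟨g, hg⟩ : ∃ _x : ℝ, _x = ofEuc (gradFn n (h n)) ⬝ᵥ ofEuc (δ n) := ⟨_, rfl⟩
    have hline : ∀ t : ℝ, Θ n (h n + t • δ n) (h n)
        = Fn n (h n) + t * g + t ^ 2 * q n / 2 := by
      intro t
      rw [hΘ]
      have h1 : h n + t • δ n - h n = t • δ n := add_sub_cancel_left _ _
      have h2 : ofEuc (t • δ n) = t • ofEuc (δ n) := rfl
      rw [h1, qf_smul, h2, dotProduct_smul]
      simp only [smul_eq_mul, hg, hqdef]
      ring
    have hΘ1 : Θ n (h (n + 1)) (h n) = Fn n (h n) + g + q n / 2 := by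
      have h1 : h n + (1 : ℝ) • δ n = h (n + 1) := by simp [hδ]
      have h2 := hline 1
      rw [h1] at h2
      rw [h2]; ring
    have hmin : ∀ t : ℝ, g + q n / 2 ≤ t * g + t ^ 2 * q n / 2 := by
      intro t
      have hmem := mem_rangeD_line (ha2i n).2 (halg n).1 t
      have h2 := (halg n).2 _ hmem
      have hδn : δ n = h (n + 1) - h n := by rw [hδ]
      rw [hΘ1, show h n + t • (h (n + 1) - h n) = h n + t • δ n from by rw [hδn],
        hline t] at h2
      linarith
    have hgq := quad_min_line (hqnn n) hmin
    have hF := hmaj n (h (n + 1))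
    rw [hΘ1] at hF
    linarith
  -- entrywise sums
  obtain ⟨E, hE⟩ : ∃ _x : ℕ → ℝ, _x = fun n => ∑ i, ∑ j, |Rn n i j - R i j| := ⟨_, rfl⟩
  obtain ⟨E', hE'⟩ : ∃ _x : ℕ → ℝ, _x = fun n => ∑ i, ∑ j, |Rn n i j - Rn (n + 1) i j| := ⟨_, rfl⟩
  have hE0 : Tendsto E atTop (𝓝 0) := by
    have h1 : ∀ i j : Fin N, Tendsto (fun n => |Rn n i j - R i j|) atTop (𝓝 0) := by
      intro i j
      have := ((ha1Rlim i j).sub_const (R i j)).abs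
      simpa using this
    have h2 := tendsto_finset_sum (Finset.univ : Finset (Fin N))
      (fun i (_ : i ∈ Finset.univ) => tendsto_finset_sum (Finset.univ : Finset (Fin N))
        (fun j (_ : j ∈ Finset.univ) => h1 i j))
    simpa [hE] using h2
  obtain ⟨n0, hn0⟩ : ∃ n0, ∀ n ≥ n0, E n ≤ lam / 2 := by
    have h1 : ∀ᶠ n in atTop, E n < lam / 2 :=
      hE0.eventually_lt_const (by positivity)
    obtain ⟨n0, hn0⟩ := eventually_atTop.mp h1
    exact ⟨n0, fun n hn => (hn0 n hn).le⟩
  -- eventual strong positivity of Rn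
  have hRnlb : ∀ n ≥ n0, ∀ x : EuclideanSpace ℝ (Fin N),
      lam / 2 * ‖x‖ ^ 2 ≤ qf (Rn n) x := by
    intro n hn x
    have hdec : qf (Rn n) x = qf R x + qf (Rn n - R) x := by
      have hM : Rn n = R + (Rn n - R) := by abel
      rw [← qf_add_left, ← hM]
    have habs := abs_qf_le (Rn n - R) x
    have hEn : (∑ i, ∑ j, |(Rn n - R) i j|) = E n := by
      simp [hE, Matrix.sub_apply]
    rw [hEn] at habs
    have h1 := hlb x
    have h2 : E n * ‖x‖ ^ 2 ≤ lam / 2 * ‖x‖ ^ 2 :=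
      mul_le_mul_of_nonneg_right (hn0 n hn) (by positivity)
    have h3 : -(qf (Rn n - R) x) ≤ E n * ‖x‖ ^ 2 := by
      have := neg_abs_le (qf (Rn n - R) x); linarith
    linarith
  -- uniform coercivity
  have hcoer : ∀ n ≥ n0, ∀ x : EuclideanSpace ℝ (Fin N),
      lam / 8 * ‖x‖ ^ 2 - (2 * ρ ^ 2 / lam - m) ≤ Fn n x := by
    intro n hn x
    rw [hFn]
    have h1 := hRnlb n hn x
    have h2 : |ofEuc (rn n) ⬝ᵥ ofEuc x| ≤ ρ * ‖x‖ :=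
      le_trans (abs_dot_le _ _) (mul_le_mul_of_nonneg_right (hρ n) (norm_nonneg _))
    have h3 : ofEuc (rn n) ⬝ᵥ ofEuc x ≤ ρ * ‖x‖ := by
      have := le_abs_self (ofEuc (rn n) ⬝ᵥ ofEuc x); linarith
    have h4 := hm x
    have h6 : 0 ≤ lam / 8 * ‖x‖ ^ 2 - ρ * ‖x‖ + 2 * ρ ^ 2 / lam := by
      have hkey2 : lam / 8 * ‖x‖ ^ 2 - ρ * ‖x‖ + 2 * ρ ^ 2 / lam
          = (lam * ‖x‖ - 4 * ρ) ^ 2 / (8 * lam) := by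
        field_simp; ring
      rw [hkey2]; positivity
    linarith
  obtain ⟨K, hK⟩ : ∃ _x : ℝ, _x = (2 * ρ ^ 2 / lam - m) + 1 := ⟨_, rfl⟩
  obtain ⟨c, hc⟩ : ∃ _x : ℝ, _x = 16 / lam + 1 := ⟨_, rfl⟩
  have hcpos : 0 < c := by rw [hc]; positivity
  have hc1 : ∀ n ≥ n0, ∀ x : EuclideanSpace ℝ (Fin N), 1 ≤ Fn n x + K := by
    intro n hn x
    have h1 := hcoer n hn x
    have h2 : 0 ≤ lam / 8 * ‖x‖ ^ 2 := by positivity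
    rw [hK]; linarith
  have hc2 : ∀ n ≥ n0, ∀ x : EuclideanSpace ℝ (Fin N),
      2 * ‖x‖ ^ 2 + 1 ≤ c * (Fn n x + K) := by
    intro n hn x
    have h1 := hcoer n hn x
    have h2 : c * (lam / 8 * ‖x‖ ^ 2 + 1)
        = 2 * ‖x‖ ^ 2 + 16 / lam + lam / 8 * ‖x‖ ^ 2 + 1 := by
      rw [hc]; field_simp; ring
    have h3 : c * (lam / 8 * ‖x‖ ^ 2 + 1) ≤ c * (Fn n x + K) := by
      apply mul_le_mul_of_nonneg_left _ hcpos.le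
      rw [hK]; linarith
    have h4 : 0 ≤ 16 / lam := by positivity
    have h5 : 0 ≤ lam / 8 * ‖x‖ ^ 2 := by positivity
    nlinarith [h1, h2, h3, h4, h5]
  -- perturbation bound
  have hE'nn : ∀ n, 0 ≤ E' n := fun n => by
    rw [hE']
    exact Finset.sum_nonneg fun i _ => Finset.sum_nonneg fun j _ => abs_nonneg _
  obtain ⟨ε, hεdef⟩ : ∃ _x : ℕ → ℝ, _x = fun n => E' n / 2 + ‖rn n - rn (n + 1)‖ := ⟨_, rfl⟩
  have hεnn : ∀ n, 0 ≤ ε n := fun n => by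
    rw [hεdef]
    exact add_nonneg (by have := hE'nn n; linarith) (norm_nonneg _)
  have hεsum : Summable ε := by
    rw [hεdef]
    apply Summable.add
    · have h1 : Summable (fun n => E' n) := by
        rw [hE']
        exact summable_sum (fun i _ => summable_sum (fun j _ => ha1R i j))
      exact h1.div_const 2
    · exact ha1r
  have hpert : ∀ n (x : EuclideanSpace ℝ (Fin N)),
      |Fn (n + 1) x - Fn n x| ≤ ε n * (2 * ‖x‖ ^ 2 + 1) := by
    intro n x
    have hdiff : Fn (n + 1) x - Fn n x
        = 1 / 2 * qf (Rn (n + 1) - Rn n) x - ofEuc (rn (n + 1) - rn n) ⬝ᵥ ofEuc x := by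
      rw [hFn, hFn]
      have hq1 : qf (Rn (n + 1)) x = qf (Rn n) x + qf (Rn (n + 1) - Rn n) x := by
        have hM : Rn (n + 1) = Rn n + (Rn (n + 1) - Rn n) := by abel
        rw [← qf_add_left, ← hM]
      have hd1 : ofEuc (rn (n + 1) - rn n) ⬝ᵥ ofEuc x
          = ofEuc (rn (n + 1)) ⬝ᵥ ofEuc x - ofEuc (rn n) ⬝ᵥ ofEuc x := by
        have h0 : ofEuc (rn (n + 1) - rn n) = ofEuc (rn (n + 1)) - ofEuc (rn n) := rfl
        rw [h0, sub_dotProduct]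
      rw [hq1, hd1]; ring
    have hb1 : |qf (Rn (n + 1) - Rn n) x| ≤ E' n * ‖x‖ ^ 2 := by
      have h0 := abs_qf_le (Rn (n + 1) - Rn n) x
      have hEn : (∑ i, ∑ j, |(Rn (n + 1) - Rn n) i j|) = E' n := by
        rw [hE']
        congr 1; funext i; congr 1; funext j
        rw [Matrix.sub_apply, abs_sub_comm]
      rwa [hEn] at h0
    have hb2 : |ofEuc (rn (n + 1) - rn n) ⬝ᵥ ofEuc x| ≤ ‖rn n - rn (n + 1)‖ * ‖x‖ := by
      have h0 := abs_dot_le (rn (n + 1) - rn n) x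
      rwa [norm_sub_rev] at h0
    have hxx : ‖x‖ ≤ ‖x‖ ^ 2 + 1 := by nlinarith [sq_nonneg (‖x‖ - 1)]
    have htri : |Fn (n + 1) x - Fn n x|
        ≤ 1 / 2 * |qf (Rn (n + 1) - Rn n) x| + |ofEuc (rn (n + 1) - rn n) ⬝ᵥ ofEuc x| := by
      rw [hdiff, sub_eq_add_neg]
      refine le_trans (abs_add_le _ _) ?_
      rw [abs_neg, abs_mul]
      simp [abs_of_nonneg]
    have hd0 : 0 ≤ ‖rn n - rn (n + 1)‖ := norm_nonneg _
    have hdx : ‖rn n - rn (n + 1)‖ * ‖x‖ ≤ ‖rn n - rn (n + 1)‖ * (‖x‖ ^ 2 + 1) :=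
      mul_le_mul_of_nonneg_left hxx hd0
    have hE'x : 0 ≤ E' n * ‖x‖ ^ 2 := mul_nonneg (hE'nn n) (by positivity)
    have hfin : 1 / 2 * (E' n * ‖x‖ ^ 2) + ‖rn n - rn (n + 1)‖ * (‖x‖ ^ 2 + 1)
        ≤ ε n * (2 * ‖x‖ ^ 2 + 1) := by
      rw [hεdef]
      have hdx2 : 0 ≤ ‖rn n - rn (n + 1)‖ * ‖x‖ ^ 2 :=
        mul_nonneg hd0 (by positivity)
      have hE'2 := hE'nn n
      nlinarith [hE'x]
    have h12 : (0:ℝ) ≤ 1/2 := by norm_num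
    exact htri.trans (le_trans (add_le_add (mul_le_mul_of_nonneg_left hb1 h12)
      (hb2.trans hdx)) hfin)
  -- boundedness via discrete Gronwall
  obtain ⟨a, ha⟩ : ∃ _x : ℕ → ℝ, _x = fun n => Fn n (h n) := ⟨_, rfl⟩
  have hbpos : ∀ n ≥ n0, 1 ≤ a n + K := fun n hn => by
    rw [ha]; exact hc1 n hn _
  have hmono : ∀ n ≥ n0, Fn n (h (n + 1)) ≤ a n := by
    intro n hn
    have h1 := hkey n
    have h2 := hqnn n
    rw [ha]
    linarith
  have hstep : ∀ n ≥ n0, a (n + 1) + K ≤ (1 + c * ε n) * (a n + K) := by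
    intro n hn
    have hp := hpert n (h (n + 1))
    have h2 := hc2 n hn (h (n + 1))
    have h3 : Fn (n + 1) (h (n + 1)) ≤ Fn n (h (n + 1)) + ε n * (2 * ‖h (n + 1)‖ ^ 2 + 1) := by
      have := le_abs_self (Fn (n + 1) (h (n + 1)) - Fn n (h (n + 1))); linarith
    have h4 : ε n * (2 * ‖h (n + 1)‖ ^ 2 + 1) ≤ ε n * (c * (Fn n (h (n + 1)) + K)) :=
      mul_le_mul_of_nonneg_left h2 (hεnn n)
    have h5 : a (n + 1) + K ≤ (1 + c * ε n) * (Fn n (h (n + 1)) + K) := by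
      have h6 : (1 + c * ε n) * (Fn n (h (n + 1)) + K)
          = (Fn n (h (n + 1)) + K) + ε n * (c * (Fn n (h (n + 1)) + K)) := by ring
      rw [h6, ha]
      linarith
    refine le_trans h5 (mul_le_mul_of_nonneg_left ?_ ?_)
    · linarith [hmono n hn]
    · have := mul_nonneg hcpos.le (hεnn n); linarith
  obtain ⟨T, hT⟩ : ∃ _x : ℝ, _x = ∑' n, ε n := ⟨_, rfl⟩
  have hpartial : ∀ s : Finset ℕ, ∑ k ∈ s, ε k ≤ T := fun s => by
    rw [hT]; exact hεsum.sum_le_tsum s (fun i _ => hεnn i)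
  have hrange_le_T : ∀ n1 p : ℕ, ∑ k ∈ Finset.range p, ε (n1 + k) ≤ T := by
    intro n1 p
    have h0 : ∑ k ∈ Finset.range p, ε (n1 + k) = ∑ k ∈ Finset.Ico n1 (n1 + p), ε k := by
      rw [Finset.sum_Ico_eq_sum_range]; simp
    rw [h0]; exact hpartial _
  have hgrow : ∀ p : ℕ, a (n0 + p) + K
      ≤ (a n0 + K) * Real.exp (c * ∑ k ∈ Finset.range p, ε (n0 + k)) := by
    intro p
    induction p with
    | zero => simp
    | succ p ih =>
      have h1 := hstep (n0 + p) (Nat.le_add_right _ _)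
      have h2 : (0:ℝ) ≤ a (n0 + p) + K := by linarith [hbpos (n0 + p) (Nat.le_add_right _ _)]
      have h3 : 1 + c * ε (n0 + p) ≤ Real.exp (c * ε (n0 + p)) := by
        have := Real.add_one_le_exp (c * ε (n0 + p)); linarith
      have h4 : a (n0 + p + 1) + K ≤ Real.exp (c * ε (n0 + p)) * (a (n0 + p) + K) :=
        le_trans h1 (mul_le_mul_of_nonneg_right h3 h2)
      have h5 : Real.exp (c * ε (n0 + p)) * (a (n0 + p) + K)
          ≤ Real.exp (c * ε (n0 + p)) *
            ((a n0 + K) * Real.exp (c * ∑ k ∈ Finset.range p, ε (n0 + k))) :=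
        mul_le_mul_of_nonneg_left ih (Real.exp_nonneg _)
      have h6 : Real.exp (c * ε (n0 + p)) *
            ((a n0 + K) * Real.exp (c * ∑ k ∈ Finset.range p, ε (n0 + k)))
          = (a n0 + K) * Real.exp (c * ∑ k ∈ Finset.range (p + 1), ε (n0 + k)) := by
        rw [Finset.sum_range_succ,
          mul_add c (∑ k ∈ Finset.range p, ε (n0 + k)) (ε (n0 + p)), Real.exp_add]
        ring
      calc a (n0 + (p + 1)) + K = a (n0 + p + 1) + K := by rw [Nat.add_succ]
        _ ≤ _ := h4
        _ ≤ _ := h5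
        _ = _ := h6
  obtain ⟨Bd, hBd⟩ : ∃ _x : ℝ, _x = (a n0 + K) * Real.exp (c * T) := ⟨_, rfl⟩
  have hBdpos : 0 < Bd := by
    rw [hBd]
    exact mul_pos (by linarith [hbpos n0 le_rfl]) (Real.exp_pos _)
  have hbd : ∀ n ≥ n0, a n + K ≤ Bd := by
    intro n hn
    obtain ⟨p, rfl⟩ := Nat.exists_eq_add_of_le hn
    refine le_trans (hgrow p) ?_
    rw [hBd]
    refine mul_le_mul_of_nonneg_left ?_ (by linarith [hbpos n0 le_rfl])
    exact Real.exp_le_exp.mpr (mul_le_mul_of_nonneg_left (hrange_le_T n0 p) hcpos.le)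
  -- summability of q
  have hqle : ∀ n ≥ n0, q n / 2 ≤ a n - a (n + 1) + c * Bd * ε n := by
    intro n hn
    have h1 := hkey n
    have hp := hpert n (h (n + 1))
    have h2 := hc2 n hn (h (n + 1))
    have h3 : a (n + 1) ≤ Fn n (h (n + 1)) + ε n * (c * (Fn n (h (n + 1)) + K)) := by
      have h4 := le_abs_self (Fn (n + 1) (h (n + 1)) - Fn n (h (n + 1)))
      have h5 := mul_le_mul_of_nonneg_left h2 (hεnn n)
      rw [ha]
      linarith
    have h6 : Fn n (h (n + 1)) + K ≤ Bd := le_trans (by linarith [hmono n hn]) (hbd n hn)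
    have h7 : ε n * (c * (Fn n (h (n + 1)) + K)) ≤ ε n * (c * Bd) :=
      mul_le_mul_of_nonneg_left (mul_le_mul_of_nonneg_left h6 hcpos.le) (hεnn n)
    have h8 : Fn n (h n) = a n := by rw [ha]
    linarith only [h1, h3, h7, h8]
  have halow : ∀ n ≥ n0, 1 - K ≤ a n := fun n hn => by linarith [hbpos n hn]
  have hTnn : 0 ≤ T := by rw [hT]; exact tsum_nonneg hεnn
  have hcBd : 0 ≤ c * Bd := mul_nonneg hcpos.le hBdpos.le
  have hqsumbd : ∀ p : ℕ, ∑ k ∈ Finset.range p, q (n0 + k)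
      ≤ 2 * (a n0 - (1 - K) + c * Bd * T) := by
    intro p
    have htel : ∑ k ∈ Finset.range p, q (n0 + k) / 2
        ≤ a n0 - a (n0 + p) + c * Bd * ∑ k ∈ Finset.range p, ε (n0 + k) := by
      induction p with
      | zero => simp
      | succ p ih =>
        rw [Finset.sum_range_succ, Finset.sum_range_succ]
        have h1 := hqle (n0 + p) (Nat.le_add_right _ _)
        have h2 : n0 + p + 1 = n0 + (p + 1) := rfl
        rw [h2] at h1
        rw [mul_add]
        linarith
    have hT1 := hrange_le_T n0 p
    have h2 := halow (n0 + p) (Nat.le_add_right _ _)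
    have h3 : c * Bd * ∑ k ∈ Finset.range p, ε (n0 + k) ≤ c * Bd * T :=
      mul_le_mul_of_nonneg_left hT1 hcBd
    have h4 : ∑ k ∈ Finset.range p, q (n0 + k) / 2
        = (∑ k ∈ Finset.range p, q (n0 + k)) / 2 := by
      rw [Finset.sum_div]
    rw [h4] at htel
    linarith
  have hqsum : Summable (fun p => q (n0 + p)) :=
    summable_of_sum_range_le (fun p => hqnn _) hqsumbd
  have hq0 : Tendsto (fun p => q (n0 + p)) atTop (𝓝 0) := hqsum.tendsto_atTop_zero
  have hqten : Tendsto q atTop (𝓝 0) := by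
    have h0 : Tendsto (fun p => q (p + n0)) atTop (𝓝 0) := by
      simpa [add_comm] using hq0
    exact (tendsto_add_atTop_iff_nat n0).mp h0
  -- conclusion
  have hqlbd : ∀ n ≥ n0, lam / 2 * ‖δ n‖ ^ 2 ≤ q n := by
    intro n hn
    have h1 : q n = qf (Rn n) (δ n) + qf (B (h n)) (δ n) := by
      simp only [hqdef]
      rw [hAn, qf_add_left]
    have h2 := qf_nonneg (hBpsd (h n)) (δ n)
    have h3 := hRnlb n hn (δ n)
    linarith
  have hnormsq : Tendsto (fun n => ‖δ n‖ ^ 2) atTop (𝓝 0) := by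
    have hup : Tendsto (fun n => 2 / lam * q n) atTop (𝓝 0) := by
      have := hqten.const_mul (2 / lam); simpa using this
    refine squeeze_zero' ?_ ?_ hup
    · exact Eventually.of_forall fun n => by positivity
    · refine eventually_atTop.mpr ⟨n0, fun n hn => ?_⟩
      have h1 := hqlbd n hn
      have h2 : 2 / lam * (lam / 2 * ‖δ n‖ ^ 2) ≤ 2 / lam * q n :=
        mul_le_mul_of_nonneg_left h1 (by positivity)
      have h3 : 2 / lam * (lam / 2 * ‖δ n‖ ^ 2) = ‖δ n‖ ^ 2 := by
        field_simp
      linarith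
  have hnorm : Tendsto (fun n => ‖δ n‖) atTop (𝓝 0) := by
    have h1 : (fun n => ‖δ n‖) = fun n => Real.sqrt (‖δ n‖ ^ 2) :=
      funext fun n => (Real.sqrt_sq (norm_nonneg _)).symm
    rw [h1]
    have h2 := (Real.continuous_sqrt.tendsto 0).comp hnormsq
    simpa [Function.comp_def] using h2
  have hfinal := tendsto_zero_iff_norm_tendsto_zero.mpr hnorm
  rw [hδ] at hfinal
  exact hfinal
end

section
/- Let A ∈ ℝ^{N×N} be symmetric positive definite, D ∈ ℝ^{N×M}, and let g ∈ ℝ^N be a nonzero vector belonging to the range of D. Then ‖g‖⁴ / (gᵀ A g) ≤ gᵀ D (Dᵀ A D)† Dᵀ g, where (·)† denotes the Moore–Penrose pseudo-inverse and ‖·‖ the Euclidean norm. -/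
open Matrix Filter Topology

open Matrix in
lemma penrose_exists {m : ℕ} (B : Matrix (Fin m) (Fin m) ℝ) (hB : B.IsHermitian) :
    ∃ P : Matrix (Fin m) (Fin m) ℝ,
      B * P * B = B ∧ P * B * P = P ∧ (B * P)ᵀ = B * P ∧ (P * B)ᵀ = P * B := by
  set U : Matrix (Fin m) (Fin m) ℝ := (hB.eigenvectorUnitary : Matrix (Fin m) (Fin m) ℝ) with hU
  have hUU : star U * U = 1 := mem_unitaryGroup_iff'.mp hB.eigenvectorUnitary.2
  set e : Fin m → ℝ := RCLike.ofReal ∘ hB.eigenvalues with he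
  have hBspec : B = U * diagonal e * star U := hB.spectral_theorem
  have key : ∀ f f' : Fin m → ℝ,
      (U * diagonal f * star U) * (U * diagonal f' * star U)
        = U * diagonal (f * f') * star U := by
    intro f f'
    calc (U * diagonal f * star U) * (U * diagonal f' * star U)
        = U * (diagonal f * ((star U * U) * diagonal f')) * star U := by
          noncomm_ring
      _ = U * diagonal (f * f') * star U := by
          rw [hUU, one_mul, diagonal_mul_diagonal]; rfl
  have keyT : ∀ f : Fin m → ℝ, (U * diagonal f * star U)ᵀ = U * diagonal f * star U := by
    intro f
    rw [transpose_mul, transpose_mul, diagonal_transpose]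
    rw [← conjTranspose_eq_transpose_of_trivial, ← conjTranspose_eq_transpose_of_trivial,
      star_eq_conjTranspose, conjTranspose_conjTranspose]
    noncomm_ring
  have h1 : e * e⁻¹ * e = e := by
    funext i
    rcases eq_or_ne (e i) 0 with h | h
    · simp [Pi.mul_apply, Pi.inv_apply, h]
    · simp [Pi.mul_apply, Pi.inv_apply, h]
  have h2 : e⁻¹ * e * e⁻¹ = e⁻¹ := by
    funext i
    rcases eq_or_ne (e i) 0 with h | h
    · simp [Pi.mul_apply, Pi.inv_apply, h]
    · simp [Pi.mul_apply, Pi.inv_apply, h]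
  refine ⟨U * diagonal e⁻¹ * star U, ?_, ?_, ?_, ?_⟩
  · rw [hBspec, key, key, h1]
  · rw [hBspec, key, key, h2]
  · rw [hBspec, key, keyT]
  · rw [hBspec, key, keyT]

theorem gradient_subspace_lower_bound
    {N M : ℕ} (A : Matrix (Fin N) (Fin N) ℝ) (hA : A.PosDef)
    (D : Matrix (Fin N) (Fin M) ℝ) (g : Fin N → ℝ) (hg : g ≠ 0)
    (hgD : ∃ u : Fin M → ℝ, g = D.mulVec u) :
    ‖toEuc g‖ ^ 4 / (g ⬝ᵥ A.mulVec g) ≤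
      g ⬝ᵥ (D * pinv (Dᵀ * A * D) * Dᵀ).mulVec g := by
  simp only [toEuc]
  obtain ⟨u, hu⟩ := hgD
  set B : Matrix (Fin M) (Fin M) ℝ := Dᵀ * A * D with hBdef
  have hAsymm : Aᵀ = A := by
    have := hA.1
    rwa [Matrix.IsHermitian, conjTranspose_eq_transpose_of_trivial] at this
  have hBsymm : Bᵀ = B := by
    rw [hBdef, transpose_mul, transpose_mul, transpose_transpose, hAsymm]
    exact (Matrix.mul_assoc _ _ _).symm
  have hBH : B.IsHermitian := by
    rw [Matrix.IsHermitian, conjTranspose_eq_transpose_of_trivial]; exact hBsymm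
  have hex := penrose_exists B hBH
  set P : Matrix (Fin M) (Fin M) ℝ := pinv B with hPdef
  have hP : B * P * B = B ∧ P * B * P = P ∧ (B * P)ᵀ = B * P ∧ (P * B)ᵀ = P * B := by
    rw [hPdef, pinv, dif_pos hex]
    exact hex.choose_spec
  obtain ⟨hP1, hP2, hP3, hP4⟩ := hP
  -- quadratic form facts
  have hquad : ∀ x : Fin M → ℝ, x ⬝ᵥ B.mulVec x = (D.mulVec x) ⬝ᵥ A.mulVec (D.mulVec x) := by
    intro x
    rw [hBdef, ← mulVec_mulVec, ← mulVec_mulVec, dotProduct_mulVec, vecMul_transpose]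
  have hpsd : ∀ x : Fin M → ℝ, 0 ≤ x ⬝ᵥ B.mulVec x := by
    intro x
    rw [hquad]
    simpa using hA.posSemidef.dotProduct_mulVec_nonneg (D.mulVec x)
  have hsym : ∀ x y : Fin M → ℝ, x ⬝ᵥ B.mulVec y = y ⬝ᵥ B.mulVec x := by
    intro x y
    calc x ⬝ᵥ B *ᵥ y = (Bᵀ *ᵥ x) ⬝ᵥ y := by rw [dotProduct_mulVec, mulVec_transpose]
      _ = y ⬝ᵥ Bᵀ *ᵥ x := dotProduct_comm _ _
      _ = y ⬝ᵥ B *ᵥ x := by rw [hBsymm]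
  -- v and w
  set v : Fin M → ℝ := Dᵀ.mulVec g with hvdef
  set w : Fin M → ℝ := P.mulVec v with hwdef
  -- step 1 : B (v - B P v) = 0
  have hz : B * (1 - B * P) = 0 := by
    have h0 : (1 - B * P) * B = 0 := by
      rw [sub_mul, one_mul, hP1, sub_self]
    calc B * (1 - B * P) = ((1 - B * P)ᵀ * Bᵀ)ᵀ := by rw [← transpose_mul, transpose_transpose]
      _ = ((1 - B * P) * B)ᵀ := by rw [transpose_sub, transpose_one, hP3, hBsymm]
      _ = 0 := by rw [h0, transpose_zero]
  set r : Fin M → ℝ := (1 - B * P).mulVec v with hrdef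
  have hBr : B.mulVec r = 0 := by
    rw [hrdef, mulVec_mulVec, hz, zero_mulVec]
  have hDr : D.mulVec r = 0 := by
    have h0 : r ⬝ᵥ B.mulVec r = 0 := by rw [hBr, dotProduct_zero]
    rw [hquad] at h0
    by_contra hne
    exact absurd h0 (ne_of_gt (hA.re_dotProduct_pos hne))
  have hrv : r ⬝ᵥ v = 0 := by
    rw [hvdef, dotProduct_mulVec, vecMul_transpose, hDr, zero_dotProduct]
  have hexp : r = v - B.mulVec w := by
    simp only [hrdef, hwdef, sub_mulVec, one_mulVec, mulVec_mulVec]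
  have hr0 : r = 0 := by
    have : r ⬝ᵥ r = 0 := by
      have hrBw : r ⬝ᵥ B.mulVec w = 0 := by
        rw [hsym, hBr, dotProduct_zero]
      calc r ⬝ᵥ r = r ⬝ᵥ (v - B.mulVec w) := by rw [← hexp]
        _ = r ⬝ᵥ v - r ⬝ᵥ B.mulVec w := dotProduct_sub _ _ _
        _ = 0 := by rw [hrv, hrBw, sub_zero]
    exact (dotProduct_self_eq_zero).mp this
  have hv : v = B.mulVec w := by
    have h := hexp.symm.trans hr0
    exact (sub_eq_zero.mp h)
  -- scalar quantities
  set a : ℝ := u ⬝ᵥ B.mulVec u with hadef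
  set b : ℝ := u ⬝ᵥ B.mulVec w with hbdef
  set c : ℝ := w ⬝ᵥ B.mulVec w with hcdef
  have ha : a = g ⬝ᵥ A.mulVec g := by rw [hadef, hquad, ← hu]
  have hapos : 0 < g ⬝ᵥ A.mulVec g := hA.re_dotProduct_pos hg
  have hgg : g ⬝ᵥ g = b := by
    rw [hbdef, ← hv]
    calc g ⬝ᵥ g = (D *ᵥ u) ⬝ᵥ g := by rw [← hu]
      _ = (u ᵥ* Dᵀ) ⬝ᵥ g := by rw [vecMul_transpose]
      _ = u ⬝ᵥ (Dᵀ *ᵥ g) := (dotProduct_mulVec _ _ _).symm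
      _ = u ⬝ᵥ v := by rw [← hvdef]
  -- RHS equals c
  have hRHS : g ⬝ᵥ (D * P * Dᵀ).mulVec g = c := by
    have h2 : g ⬝ᵥ (D * P * Dᵀ).mulVec g = v ⬝ᵥ (P.mulVec v) := by
      calc g ⬝ᵥ (D * P * Dᵀ) *ᵥ g = g ⬝ᵥ D *ᵥ (P *ᵥ (Dᵀ *ᵥ g)) := by
            rw [← mulVec_mulVec, ← mulVec_mulVec]
        _ = (g ᵥ* D) ⬝ᵥ (P *ᵥ (Dᵀ *ᵥ g)) := dotProduct_mulVec _ _ _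
        _ = (Dᵀ *ᵥ g) ⬝ᵥ (P *ᵥ (Dᵀ *ᵥ g)) := by rw [← mulVec_transpose]
        _ = v ⬝ᵥ (P.mulVec v) := by rw [← hvdef]
    have hPBfact : ∀ y : Fin M → ℝ,
        (B.mulVec y) ⬝ᵥ (P.mulVec (B.mulVec y)) = y ⬝ᵥ B.mulVec y := by
      intro y
      calc (B *ᵥ y) ⬝ᵥ (P *ᵥ (B *ᵥ y))
          = (y ᵥ* Bᵀ) ⬝ᵥ ((P * B) *ᵥ y) := by rw [mulVec_mulVec, vecMul_transpose]
        _ = y ⬝ᵥ (Bᵀ *ᵥ ((P * B) *ᵥ y)) := (dotProduct_mulVec _ _ _).symm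
        _ = y ⬝ᵥ ((Bᵀ * (P * B)) *ᵥ y) := by rw [mulVec_mulVec]
        _ = y ⬝ᵥ (B *ᵥ y) := by rw [hBsymm, ← Matrix.mul_assoc, hP1]
    rw [h2, hv]
    exact (hPBfact w).trans hcdef.symm
  -- norm
  have hnorm : ‖(WithLp.equiv 2 (Fin N → ℝ)).symm g‖ ^ 2 = g ⬝ᵥ g := by
    rw [EuclideanSpace.norm_eq]
    rw [Real.sq_sqrt (by positivity)]
    simp [dotProduct, Real.norm_eq_abs, sq_abs, pow_two]
  have hnorm4 : ‖(WithLp.equiv 2 (Fin N → ℝ)).symm g‖ ^ 4 = b ^ 2 := by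
    rw [show (4 : ℕ) = 2 * 2 from rfl, pow_mul, hnorm, hgg]
  -- Cauchy-Schwarz
  have hCS : b ^ 2 ≤ a * c := by
    rcases eq_or_lt_of_le (hpsd u) with h | hapos'
    · exfalso
      linarith [h, hadef, ha, hapos]
    · set t : ℝ := b / a with htdef
      have h := hpsd (w - t • u)
      have hexp2 : (w - t • u) ⬝ᵥ B.mulVec (w - t • u) = c - 2 * t * b + t ^ 2 * a := by
        rw [mulVec_sub, mulVec_smul, dotProduct_sub, sub_dotProduct, sub_dotProduct,
          dotProduct_smul, smul_dotProduct, smul_dotProduct, dotProduct_smul]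
        rw [← hcdef, ← hadef]
        rw [hsym w u, ← hbdef]
        simp only [smul_eq_mul]
        ring
      rw [hexp2] at h
      have hapos2 : 0 < a := by rw [hadef]; exact hapos'
      have ht : t * a = b := by rw [htdef]; field_simp
      nlinarith [h, hapos2, ht, mul_pos hapos2 hapos2]
  -- conclude
  have hapos0 : 0 < a := by rw [ha]; exact hapos
  rw [hnorm4, hRHS, ← ha, div_le_iff₀ hapos0]
  nlinarith [hCS]
end

section
/- Let A ∈ ℝ^{N×N} be symmetric positive definite, D ∈ ℝ^{N×M}, and let g ∈ ℝ^N belong to the range of D. Then gᵀ D (Dᵀ A D)† Dᵀ g ≤ gᵀ A⁻¹ g, where (·)† denotes the Moore–Penrose pseudo-inverse; equality holds when M = N and D has full rank N. -/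
open Matrix Filter Topology

/-- Uniqueness of a solution of the Penrose equations. -/
theorem penrose_unique' {n : ℕ} (S B C : Matrix (Fin n) (Fin n) ℝ)
    (hB1 : S * B * S = S) (hB2 : B * S * B = B) (hB3 : (S * B)ᵀ = S * B) (hB4 : (B * S)ᵀ = B * S)
    (hC1 : S * C * S = S) (hC2 : C * S * C = C) (hC3 : (S * C)ᵀ = S * C) (hC4 : (C * S)ᵀ = C * S) :
    B = C := by
  have h1 : B = B * S * C := by
    calc B = B * S * B := hB2.symm
    _ = B * (S * B)ᵀ := by rw [hB3, mul_assoc]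
    _ = B * (Bᵀ * Sᵀ) := by rw [transpose_mul]
    _ = B * Bᵀ * (S * C * S)ᵀ := by rw [hC1, mul_assoc]
    _ = B * (S * B)ᵀ * (S * C)ᵀ := by
          simp only [transpose_mul, Matrix.mul_assoc]
    _ = B * (S * B) * (S * C) := by rw [hB3, hC3]
    _ = B * S * C := by rw [← mul_assoc, ← mul_assoc, hB2]
  have h2 : C = B * S * C := by
    calc C = C * S * C := hC2.symm
    _ = (C * S)ᵀ * C := by rw [hC4]
    _ = Sᵀ * Cᵀ * C := by rw [transpose_mul]
    _ = (S * B * S)ᵀ * Cᵀ * C := by rw [hB1]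
    _ = (B * S)ᵀ * ((C * S)ᵀ * C) := by
          simp only [transpose_mul, Matrix.mul_assoc]
    _ = (B * S) * (C * S * C) := by rw [hB4, hC4, mul_assoc]
    _ = B * S * C := by rw [hC2]
  rw [h1, ← h2]

/-- Existence of a solution of the Penrose equations for a real symmetric matrix. -/
theorem penrose_exists' {n : ℕ} (S : Matrix (Fin n) (Fin n) ℝ) (hS : S.IsHermitian) :
    ∃ B : Matrix (Fin n) (Fin n) ℝ,
      S * B * S = S ∧ B * S * B = B ∧ (S * B)ᵀ = S * B ∧ (B * S)ᵀ = B * S := by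
  set U : Matrix (Fin n) (Fin n) ℝ := (hS.eigenvectorUnitary : Matrix (Fin n) (Fin n) ℝ) with hUdef
  have hU2 : star U * U = 1 := mem_unitaryGroup_iff'.mp hS.eigenvectorUnitary.2
  have hstar : star U = Uᵀ := by
    rw [star_eq_conjTranspose, conjTranspose_eq_transpose_of_trivial]
  set d : Fin n → ℝ := hS.eigenvalues with hddef
  have hspec : S = U * diagonal d * star U := by
    have := hS.spectral_theorem
    simpa using this
  have key : ∀ e f : Fin n → ℝ,
      (U * diagonal e * star U) * (U * diagonal f * star U)
        = U * diagonal (fun i => e i * f i) * star U := by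
    intro e f
    have h1 : U * diagonal e * star U * U = U * diagonal e := by
      rw [mul_assoc, hU2, mul_one]
    calc (U * diagonal e * star U) * (U * diagonal f * star U)
        = (U * diagonal e * star U * U) * diagonal f * star U := by
          simp only [Matrix.mul_assoc]
      _ = U * (diagonal e * diagonal f) * star U := by
          rw [h1]; simp only [Matrix.mul_assoc]
      _ = U * diagonal (fun i => e i * f i) * star U := by
          rw [diagonal_mul_diagonal]
  have symm : ∀ e : Fin n → ℝ, (U * diagonal e * star U)ᵀ = U * diagonal e * star U := by
    intro e
    rw [hstar, transpose_mul, transpose_mul, transpose_transpose, diagonal_transpose,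
      Matrix.mul_assoc]
  have hxx : ∀ x : ℝ, x * x⁻¹ * x = x := by
    intro x; by_cases h : x = 0 <;> field_simp [h]
  have hyy : ∀ x : ℝ, x⁻¹ * x * x⁻¹ = x⁻¹ := by
    intro x; by_cases h : x = 0 <;> field_simp [h]
  refine ⟨U * diagonal (fun i => (d i)⁻¹) * star U, ?_, ?_, ?_, ?_⟩
  · rw [hspec, key, key]
    simp only [hxx]
  · rw [hspec, key, key]
    simp only [hyy]
  · rw [hspec, key]; exact symm _
  · rw [hspec, key]; exact symm _

theorem subspace_upper_bound_inverse
    {N M : ℕ} (A : Matrix (Fin N) (Fin N) ℝ) (hA : A.PosDef)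
    (D : Matrix (Fin N) (Fin M) ℝ) (g : Fin N → ℝ)
    (hgD : ∃ u : Fin M → ℝ, g = D.mulVec u) :
    g ⬝ᵥ (D * pinv (Dᵀ * A * D) * Dᵀ).mulVec g ≤ g ⬝ᵥ A⁻¹.mulVec g ∧
    (M = N → D.rank = N →
      g ⬝ᵥ (D * pinv (Dᵀ * A * D) * Dᵀ).mulVec g = g ⬝ᵥ A⁻¹.mulVec g) := by
  clear hgD
  have hAT : Aᵀ = A := by
    rw [← conjTranspose_eq_transpose_of_trivial]; exact hA.1
  set S : Matrix (Fin M) (Fin M) ℝ := Dᵀ * A * D with hSdef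
  have hST : Sᵀ = S := by
    rw [hSdef, transpose_mul, transpose_mul, transpose_transpose, hAT, Matrix.mul_assoc]
  have hSherm : S.IsHermitian := by
    show Sᴴ = S
    rw [conjTranspose_eq_transpose_of_trivial, hST]
  have hex := penrose_exists' S hSherm
  have hPdef : pinv S = hex.choose := by
    unfold pinv
    rw [dif_pos hex]
  set P : Matrix (Fin M) (Fin M) ℝ := pinv S with hP
  obtain ⟨hP1, hP2, hP3, hP4⟩ : S * P * S = S ∧ P * S * P = P ∧ (S * P)ᵀ = S * P ∧
      (P * S)ᵀ = P * S := by
    show S * pinv S * S = S ∧ pinv S * S * pinv S = pinv S ∧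
      (S * pinv S)ᵀ = S * pinv S ∧ (pinv S * S)ᵀ = pinv S * S
    rw [← hP, hPdef]; exact hex.choose_spec

  -- symmetry of P
  have e1 : S * Pᵀ * S = S := by
    have h := congrArg Matrix.transpose hP1
    simp only [transpose_mul, hST, Matrix.mul_assoc] at h ⊢
    exact h
  have e2 : Pᵀ * S * Pᵀ = Pᵀ := by
    have h := congrArg Matrix.transpose hP2
    simp only [transpose_mul, hST, Matrix.mul_assoc] at h ⊢
    exact h
  have hSPt : S * Pᵀ = P * S := by
    calc S * Pᵀ = (P * Sᵀ)ᵀ := by rw [transpose_mul, transpose_transpose]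
    _ = (P * S)ᵀ := by rw [hST]
    _ = P * S := hP4
  have hPtS : Pᵀ * S = S * P := by
    calc Pᵀ * S = (Sᵀ * P)ᵀ := by rw [transpose_mul, transpose_transpose]
    _ = (S * P)ᵀ := by rw [hST]
    _ = S * P := hP3
  have e3 : (S * Pᵀ)ᵀ = S * Pᵀ := by rw [hSPt, hP4]
  have e4 : (Pᵀ * S)ᵀ = Pᵀ * S := by rw [hPtS, hP3]
  have hPsymm : P = Pᵀ := penrose_unique' S P Pᵀ hP1 hP2 hP3 hP4 e1 e2 e3 e4
  set B : Matrix (Fin N) (Fin N) ℝ := D * P * Dᵀ with hBdef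
  have hBt : Bᵀ = B := by
    rw [hBdef, transpose_mul, transpose_mul, transpose_transpose, ← hPsymm,
      Matrix.mul_assoc]
  have hBAB : B * A * B = B := by
    have h : B * A * B = D * (P * (Dᵀ * A * D) * P) * Dᵀ := by
      rw [hBdef]; simp only [Matrix.mul_assoc]
    rw [h, ← hSdef, hP2]
  have hdet : IsUnit A.det := isUnit_iff_ne_zero.mpr hA.det_pos.ne'
  have hAl : A⁻¹ * A = 1 := Matrix.nonsing_inv_mul A hdet
  have hAr : A * A⁻¹ = 1 := Matrix.mul_nonsing_inv A hdet
  have hAinvT : A⁻¹ᵀ = A⁻¹ := by rw [Matrix.transpose_nonsing_inv, hAT]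
  set C : Matrix (Fin N) (Fin N) ℝ := A⁻¹ - B with hCdef
  have hCt : Cᵀ = C := by rw [hCdef, transpose_sub, hAinvT, hBt]
  have hCore : C * A * C = C := by
    have h1 : B * A * A⁻¹ = B := by rw [Matrix.mul_assoc, hAr, Matrix.mul_one]
    calc C * A * C = (1 - B * A) * (A⁻¹ - B) := by
          rw [hCdef, Matrix.sub_mul, hAl]
    _ = A⁻¹ - B := by
          rw [Matrix.sub_mul, Matrix.one_mul, Matrix.mul_sub, h1, hBAB, sub_self, sub_zero]
    _ = C := hCdef.symm
  have hq : ∀ v : Fin N → ℝ, 0 ≤ v ⬝ᵥ A.mulVec v := by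
    intro v
    simpa using hA.posSemidef.dotProduct_mulVec_nonneg v
  have hkey : 0 ≤ g ⬝ᵥ C.mulVec g := by
    have h1 : g ⬝ᵥ C.mulVec g = (C.mulVec g) ⬝ᵥ A.mulVec (C.mulVec g) := by
      conv_lhs => rw [show C = Cᵀ * A * C from by rw [hCt, hCore]]
      simp only [← Matrix.mulVec_mulVec]
      rw [Matrix.dotProduct_mulVec g Cᵀ, Matrix.vecMul_transpose]
    rw [h1]
    exact hq _
  have hsplit : g ⬝ᵥ C.mulVec g = g ⬝ᵥ A⁻¹.mulVec g - g ⬝ᵥ B.mulVec g := by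
    rw [hCdef, Matrix.sub_mulVec, dotProduct_sub]
  constructor
  · -- inequality
    show g ⬝ᵥ B.mulVec g ≤ g ⬝ᵥ A⁻¹.mulVec g
    rw [hsplit] at hkey
    linarith
  · -- equality case
    intro hMN hrank
    subst hMN
    -- D is invertible
    have hcard : D.rank = Fintype.card (Fin M) := by simpa using hrank
    have htop : LinearMap.range D.mulVecLin = ⊤ := by
      apply Submodule.eq_top_of_finrank_eq
      rw [← Matrix.rank, hcard]
      simp [Module.finrank_fintype_fun_eq_card]
    have hsurj : Function.Surjective D.mulVec := by
      have h := LinearMap.range_eq_top.mp htop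
      intro v
      obtain ⟨u, hu⟩ := h v
      exact ⟨u, by simpa using hu⟩
    have hUD : IsUnit D := Matrix.mulVec_surjective_iff_isUnit.mp hsurj
    have hdD : IsUnit D.det := (Matrix.isUnit_iff_isUnit_det D).mp hUD
    have hdDT : IsUnit Dᵀ.det := by rwa [Matrix.det_transpose]
    have hdS : IsUnit S.det := by
      rw [hSdef, Matrix.det_mul, Matrix.det_mul]
      exact (hdDT.mul hdet).mul hdD
    -- S⁻¹ satisfies the Penrose equations, hence P = S⁻¹
    have hSl : S⁻¹ * S = 1 := Matrix.nonsing_inv_mul S hdS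
    have hSr : S * S⁻¹ = 1 := Matrix.mul_nonsing_inv S hdS
    have hPinv : P = S⁻¹ := by
      apply penrose_unique' S P S⁻¹ hP1 hP2 hP3 hP4
      · rw [hSr, Matrix.one_mul]
      · rw [hSl, Matrix.one_mul]
      · rw [hSr, Matrix.transpose_one]
      · rw [hSl, Matrix.transpose_one]
    -- D * S⁻¹ * Dᵀ = A⁻¹
    have hDS : B = A⁻¹ := by
      rw [hBdef, hPinv, hSdef, Matrix.mul_inv_rev, Matrix.mul_inv_rev]
      calc D * (D⁻¹ * (A⁻¹ * Dᵀ⁻¹)) * Dᵀ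
          = (D * D⁻¹) * A⁻¹ * (Dᵀ⁻¹ * Dᵀ) := by simp only [Matrix.mul_assoc]
        _ = A⁻¹ := by
            rw [Matrix.mul_nonsing_inv D hdD, Matrix.nonsing_inv_mul Dᵀ hdDT,
              Matrix.one_mul, Matrix.mul_one]
    show g ⬝ᵥ B.mulVec g = g ⬝ᵥ A⁻¹.mulVec g
    rw [hDS]
end
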